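/- Let (X,x) be a normal two-dimensional singularity over an algebraically closed field with resolution σ : X̃ → X having exceptional divisor with negative definite intersection matrix. If Pic^0(X̃) = 0, then Pic(U) = Pic(X̃)/⟨D⟩ is a finite group, where ⟨D⟩ is the subgroup generated by classes of divisors supported on the exceptional locus; in particular the dualizing sheaf ω_U has finite order in Pic(U). -/

import Mathlib

/-- Let `(X,x)` be a normal two-dimensional singularity with
resolution `σ : X̃ → X` whose exceptional divisor `∪ Dᵢ` has negative definite
intersection matrix `M = (Dᵢ·Dⱼ)`.  We model `Pic(X̃)` as an abelian group `P` together
with the class map `c : P → ℤ^I`, `L ↦ (L·Dᵢ)ᵢ`, which is injective with image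
everything exactly when `Pic⁰(X̃) = 0` (the hypothesis), and the classes `D i ∈ P` of the
exceptional divisors, whose images under `c` are the rows of `M`.  Then
`Pic(U) = Pic(X̃)/⟨D⟩` is finite; in particular every element of `P` — e.g. the class of
the dualizing sheaf `ω_U` — has a positive multiple in `⟨D⟩`, i.e. finite order in
`Pic(U)`. -/
theorem pic_of_punctured_spectrum_finite_of_pic0_trivial
    (I : Type*) [Fintype I] [DecidableEq I]
    (M : Matrix I I ℤ) (hsymm : M.IsSymm)
    (hneg : ∀ v : I → ℝ, v ≠ 0 →
      dotProduct v ((M.map (Int.cast : ℤ → ℝ)).mulVec v) < 0)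
    (P : Type*) [AddCommGroup P]
    (c : P →+ (I → ℤ))
    -- `Pic⁰(X̃) = ker c = 0` and `Pic(X̃)/Pic⁰(X̃) ≅ ⊕ᵢ ℤ[Dᵢ]`:
    (hc : Function.Bijective c)
    (D : I → P) (hD : ∀ i, c (D i) = M i) :
    Finite (P ⧸ AddSubgroup.closure (Set.range D)) ∧
      ∀ ω : P, ∃ m : ℕ, 0 < m ∧ m • ω ∈ AddSubgroup.closure (Set.range D) := by
  have hdet : M.det ≠ 0 := by
    intro h0
    have h0' : (M.map (Int.cast : ℤ → ℝ)).det = 0 := by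
      have := (Int.castRingHom ℝ).map_det M
      simp only [h0] at this
      simpa [RingHom.mapMatrix, Matrix.map] using this.symm
    obtain ⟨v, hv, hmv⟩ := (Matrix.exists_mulVec_eq_zero_iff).mpr h0'
    have := hneg v hv
    rw [hmv] at this
    simp [dotProduct] at this
  set S := AddSubgroup.closure (Set.range D) with hS
  have key : ∀ ω : P, (M.det) • ω ∈ S := by
    intro ω
    set v := c ω with hv
    set w := Matrix.vecMul v (Matrix.adjugate M) with hw
    have hsum : (∑ j, w j • D j) ∈ S := by
      refine AddSubgroup.sum_mem _ fun j _ => AddSubgroup.zsmul_mem _ ?_ _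
      exact AddSubgroup.subset_closure ⟨j, rfl⟩
    have h1 : c (∑ j, w j • D j) = Matrix.vecMul w M := by
      rw [map_sum]
      funext i
      simp only [Finset.sum_apply, map_zsmul, hD]
      simp [Matrix.vecMul, dotProduct, mul_comm]
    have h2 : Matrix.vecMul w M = M.det • v := by
      rw [hw, Matrix.vecMul_vecMul, Matrix.adjugate_mul]
      funext i
      simp [Matrix.vecMul, dotProduct, Matrix.one_apply, mul_comm]
    have hceq : c (∑ j, w j • D j) = c (M.det • ω) := by
      rw [h1, h2, map_zsmul, hv]
    rwa [hc.1 hceq] at hsum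
  have key2 : ∀ ω : P, M.det.natAbs • ω ∈ S := by
    intro ω
    have h := key ω
    have habs : ((M.det.natAbs : ℤ)) • ω ∈ S := by
      rcases le_total 0 M.det with h' | h'
      · rwa [Int.natAbs_of_nonneg h']
      · have : (M.det.natAbs : ℤ) = -M.det := by omega
        rw [this, neg_smul]
        exact AddSubgroup.neg_mem _ h
    rwa [natCast_zsmul] at habs
  have hmpos : 0 < M.det.natAbs := Int.natAbs_pos.mpr hdet
  refine ⟨?_, fun ω => ⟨M.det.natAbs, hmpos, key2 ω⟩⟩
  have hfgQ : AddGroup.FG (P ⧸ S) := by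
    have h1 : AddGroup.FG (I → ℤ) := Module.Finite.iff_addGroup_fg.mp inferInstance
    have h2 : AddGroup.FG P :=
      AddGroup.fg_of_surjective (G := I → ℤ)
        (f := (AddEquiv.ofBijective c hc).symm.toAddMonoidHom)
        (AddEquiv.ofBijective c hc).symm.surjective
    exact AddGroup.fg_of_surjective (f := QuotientAddGroup.mk' S)
      (QuotientAddGroup.mk'_surjective S)
  refine AddCommGroup.finite_of_fg_torsion _ fun q => ?_
  obtain ⟨ω, rfl⟩ := QuotientAddGroup.mk'_surjective S q
  rw [isOfFinAddOrder_iff_nsmul_eq_zero]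
  refine ⟨M.det.natAbs, hmpos, ?_⟩
  rw [← map_nsmul, QuotientAddGroup.mk'_apply, QuotientAddGroup.eq_zero_iff]
  exact key2 ω
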